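/- For every continuous compactly supported function f : G → A and every ε > 0, there exists a continuous compactly supported function g : G → A such that the support of g is contained in the support of f, sup_{x∈G} ‖f(x) − g(x)‖ ≤ ε, and the set {(x, yH) ∈ G × (G/H) : g(x) ∉ J_{yH}} has compact closure in G × (G/H). (In other words, the functions whose 'fiberwise image' over G × G/H is compactly supported are uniformly dense among the compactly supported continuous A-valued functions, with control of supports.) -/

import Mathlib

open scoped MultiplierAlgebra ZeroAtInfty

/-- The ideal `J_{yH}` of the `C₀(G/H)`-algebra `A`: the closed linear span of
`{Φ(φ)·a : φ ∈ C₀(G/H), φ(yH) = 0, a ∈ A}`.  Here `Φ(φ)·a` is expressed as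
`(Φ φ).fst a`, the left part of the double centralizer `Φ φ` applied to `a`. -/
noncomputable def idealJ {G : Type*} [Group G] [TopologicalSpace G] [IsTopologicalGroup G]
    (H : Subgroup G) {A : Type*} [NonUnitalCStarAlgebra A]
    (Φ : C₀(G ⧸ H, ℂ) →⋆ₙₐ[ℂ] 𝓜(ℂ, A)) (yH : G ⧸ H) : Set A :=
  closure (Submodule.span ℂ
    {b : A | ∃ (φ : C₀(G ⧸ H, ℂ)) (a : A), φ yH = 0 ∧ b = (Φ φ).fst a} : Set A)

/-!
Nondegeneracy makes `Φ(φ)` converge strongly to the identity of `A` along the approximate unit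
of `C₀(G/H)` (functions of norm `≤ 1` that are `1` on ever larger compact sets): the set of `a`
where this holds is a closed subspace, by equicontinuity of the contractions `Φ(φ)`, and it contains
every `Φ(ψ)·b`. Equicontinuity also makes the convergence uniform on the compact set `f(G)`. Hence
`g = Φ(φ) ∘ f` is `ε`-close to `f` for some compactly supported `φ`, and since `Φ(φ)·a ∈ J_{yH}`
whenever `φ(yH) = 0`, the set where `g(x) ∉ J_{yH}` lies in `supp f × supp φ`.
-/

open Filter Topology Set Metric

theorem EquicontinuousOn.tendstoUniformlyOn_of_tendsto {ι X α : Type*} [TopologicalSpace X]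
    [UniformSpace α] {F : ι → X → α} {f : X → α} {l : Filter ι} {K : Set X} (hK : IsCompact K)
    (hF : EquicontinuousOn F K) (h : ∀ x ∈ K, Tendsto (F · x) l (𝓝 (f x))) :
    TendstoUniformlyOn F f l K := by
  refine UniformOnFun.tendsto_iff_tendstoUniformlyOn.1
    ((EquicontinuousOn.tendsto_uniformOnFun_iff_pi' (𝔖 := {K}) (by simpa using hK)
      (by simpa using hF) l f).2 ?_) K rfl
  exact tendsto_pi_nhds.2 fun ⟨x, hx⟩ ↦ h x (by simpa using hx)

theorem DoubleCentralizer.norm_fst_apply_le {𝕜 A : Type*} [NontriviallyNormedField 𝕜]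
    [NonUnitalNormedRing A] [NormedSpace 𝕜 A] [SMulCommClass 𝕜 A A] [IsScalarTower 𝕜 A A]
    [StarRing A] [CStarRing A] (m : 𝓜(𝕜, A)) (a : A) : ‖m.fst a‖ ≤ ‖m‖ * ‖a‖ :=
  m.norm_fst ▸ m.fst.le_opNorm a

namespace ZeroAtInftyContinuousMap

variable {Q β : Type*} [TopologicalSpace Q]

section NormedRing

variable [NormedRing β]

theorem norm_apply_le (φ : C₀(Q, β)) (y : Q) : ‖φ y‖ ≤ ‖φ‖ :=
  φ.toBCF.norm_coe_le_norm y

theorem norm_le_iff {φ : C₀(Q, β)} {C : ℝ} (hC : 0 ≤ C) : ‖φ‖ ≤ C ↔ ∀ y, ‖φ y‖ ≤ C :=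
  BoundedContinuousFunction.norm_le (f := φ.toBCF) hC

variable (Q β) in
def approxUnit : Filter (closedBall (0 : C₀(Q, β)) 1) :=
  ⨅ (K : Set Q) (_ : IsCompact K), 𝓟 {φ | EqOn (φ : C₀(Q, β)) 1 K}

theorem hasBasis_approxUnit :
    (approxUnit Q β).HasBasis IsCompact fun K ↦ {φ | EqOn (φ : C₀(Q, β)) 1 K} :=
  hasBasis_biInf_principal'
    (fun _ hK _ hL ↦ ⟨_, hK.union hL, fun _ h ↦ h.mono subset_union_left,
      fun _ h ↦ h.mono subset_union_right⟩)
    ⟨∅, isCompact_empty⟩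

theorem tendsto_mul_approxUnit [NormOneClass β] (ψ : C₀(Q, β)) :
    Tendsto (fun φ : closedBall (0 : C₀(Q, β)) 1 ↦ (φ : C₀(Q, β)) * ψ) (approxUnit Q β) (𝓝 ψ) := by
  refine hasBasis_approxUnit.tendsto_iff nhds_basis_closedBall |>.2 fun δ hδ ↦ ?_
  obtain ⟨K, hK, hψK⟩ : ∃ K, IsCompact K ∧ ∀ y ∉ K, ‖ψ y‖ ≤ δ / 2 := by
    simpa using hasBasis_cocompact.eventually_iff.1 <|
      (zero_at_infty ψ).eventually (closedBall_mem_nhds (0 : β) (half_pos hδ))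
  refine ⟨K, hK, fun ⟨φ, hφ⟩ hφK ↦ ?_⟩
  rw [mem_closedBall, dist_eq_norm, norm_le_iff hδ.le]
  intro y
  simp only [coe_sub, coe_mul, Pi.sub_apply, Pi.mul_apply]
  by_cases hy : y ∈ K
  · simp [show φ y = 1 from hφK hy, hδ.le]
  · have hφy : ‖φ y‖ ≤ 1 := (norm_apply_le φ y).trans (by simpa using hφ)
    calc ‖φ y * ψ y - ψ y‖ = ‖(φ y - 1) * ψ y‖ := by rw [sub_one_mul]
      _ ≤ ‖φ y - 1‖ * ‖ψ y‖ := norm_mul_le _ _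
      _ ≤ 2 * (δ / 2) := by
        gcongr
        · exact (norm_sub_le _ _).trans (by rw [norm_one]; linarith)
        · exact hψK y hy
      _ = δ := by ring

end NormedRing

theorem exists_norm_le_one_eqOn_one_hasCompactSupport {𝕜 : Type*} [RCLike 𝕜]
    [LocallyCompactSpace Q] [RegularSpace Q] {K : Set Q} (hK : IsCompact K) :
    ∃ φ : C₀(Q, 𝕜), ‖φ‖ ≤ 1 ∧ EqOn φ 1 K ∧ HasCompactSupport φ := by
  obtain ⟨u, huK, -, hu, hu01⟩ :=
    exists_continuous_one_zero_of_isCompact hK isClosed_empty (disjoint_empty _)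
  have hsupp : HasCompactSupport fun y ↦ (u y : 𝕜) := hu.comp_left RCLike.ofReal_zero
  refine ⟨⟨⟨fun y ↦ u y, RCLike.continuous_ofReal.comp u.continuous⟩,
    hsupp.is_zero_at_infty⟩, (norm_le_iff zero_le_one).2 fun y ↦ ?_, fun y hy ↦ ?_, hsupp⟩
  · simpa [abs_of_nonneg (hu01 y).1] using (hu01 y).2
  · simp [show u y = 1 from huK hy]

end ZeroAtInftyContinuousMap

open ZeroAtInftyContinuousMap

section Multiplier

variable {Q A : Type*} [TopologicalSpace Q] [NonUnitalCStarAlgebra A]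
  (Φ : C₀(Q, ℂ) →⋆ₙₐ[ℂ] 𝓜(ℂ, A))

theorem norm_fst_map_apply_le (φ : C₀(Q, ℂ)) (a : A) : ‖(Φ φ).fst a‖ ≤ ‖φ‖ * ‖a‖ :=
  (DoubleCentralizer.norm_fst_apply_le _ a).trans <|
    mul_le_mul_of_nonneg_right (NonUnitalStarAlgHom.norm_apply_le Φ φ) (norm_nonneg a)

theorem equicontinuous_fst_map_approxUnit :
    Equicontinuous fun φ : closedBall (0 : C₀(Q, ℂ)) 1 ↦ ⇑(Φ φ).fst := by
  refine (LipschitzWith.uniformEquicontinuous _ 1 fun ⟨φ, hφ⟩ ↦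
    LipschitzWith.of_dist_le_mul fun a b ↦ ?_).equicontinuous
  rw [dist_eq_norm, dist_eq_norm, ← map_sub, NNReal.coe_one, one_mul]
  exact (norm_fst_map_apply_le Φ φ _).trans
    (mul_le_of_le_one_left (norm_nonneg _) (by simpa using hφ))

theorem tendsto_fst_map_approxUnit_fst_map (ψ : C₀(Q, ℂ)) (b : A) :
    Tendsto (fun φ : closedBall (0 : C₀(Q, ℂ)) 1 ↦ (Φ φ).fst ((Φ ψ).fst b)) (approxUnit Q ℂ)
      (𝓝 ((Φ ψ).fst b)) := by
  rw [tendsto_iff_norm_sub_tendsto_zero]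
  have hbound (φ : C₀(Q, ℂ)) :
      ‖(Φ φ).fst ((Φ ψ).fst b) - (Φ ψ).fst b‖ ≤ ‖φ * ψ - ψ‖ * ‖b‖ := by
    have : (Φ (φ * ψ - ψ)).fst b = (Φ φ).fst ((Φ ψ).fst b) - (Φ ψ).fst b := by
      rw [map_sub, map_mul, DoubleCentralizer.sub_fst, DoubleCentralizer.mul_fst]
      rfl
    exact this ▸ norm_fst_map_apply_le Φ _ b
  refine squeeze_zero (fun _ ↦ norm_nonneg _) (fun φ ↦ hbound φ) ?_
  simpa using (tendsto_iff_norm_sub_tendsto_zero.1 (tendsto_mul_approxUnit ψ)).mul_const ‖b‖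

theorem tendsto_fst_map_approxUnit
    (hnondeg : closure (Submodule.span ℂ
        {b : A | ∃ (φ : C₀(Q, ℂ)) (a : A), b = (Φ φ).fst a} : Set A) = univ) (a : A) :
    Tendsto (fun φ : closedBall (0 : C₀(Q, ℂ)) 1 ↦ (Φ φ).fst a) (approxUnit Q ℂ) (𝓝 a) := by
  let M : Submodule ℂ A :=
    { carrier := {a | Tendsto (fun φ : closedBall (0 : C₀(Q, ℂ)) 1 ↦ (Φ φ).fst a)
        (approxUnit Q ℂ) (𝓝 a)}
      zero_mem' := by simpa using tendsto_const_nhds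
      add_mem' := fun ha hb ↦ by simpa using ha.add hb
      smul_mem' := fun c _ ha ↦ by simpa using ha.const_smul c }
  have hM : IsClosed (M : Set A) :=
    (equicontinuous_fst_map_approxUnit Φ).isClosed_setOfPred_tendsto continuous_id
  have hspan : Submodule.span ℂ {b : A | ∃ φ a, b = (Φ φ).fst a} ≤ M :=
    Submodule.span_le.2 fun _ ⟨ψ, b, hb⟩ ↦ hb ▸ tendsto_fst_map_approxUnit_fst_map Φ ψ b
  exact closure_minimal hspan hM (hnondeg ▸ mem_univ a)

theorem tendstoUniformlyOn_fst_map_approxUnit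
    (hnondeg : closure (Submodule.span ℂ
        {b : A | ∃ (φ : C₀(Q, ℂ)) (a : A), b = (Φ φ).fst a} : Set A) = univ)
    {T : Set A} (hT : IsCompact T) :
    TendstoUniformlyOn (fun φ : closedBall (0 : C₀(Q, ℂ)) 1 ↦ ⇑(Φ φ).fst) id (approxUnit Q ℂ) T :=
  EquicontinuousOn.tendstoUniformlyOn_of_tendsto hT
    ((equicontinuous_fst_map_approxUnit Φ).equicontinuousOn T)
    fun a _ ↦ tendsto_fst_map_approxUnit Φ hnondeg a

end Multiplier

section idealJ

variable {G : Type*} [Group G] [TopologicalSpace G] [IsTopologicalGroup G] (H : Subgroup G)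
  {A : Type*} [NonUnitalCStarAlgebra A] (Φ : C₀(G ⧸ H, ℂ) →⋆ₙₐ[ℂ] 𝓜(ℂ, A))

theorem zero_mem_idealJ (yH : G ⧸ H) : 0 ∈ idealJ H Φ yH :=
  subset_closure (Submodule.zero_mem _)

theorem fst_map_apply_mem_idealJ {φ : C₀(G ⧸ H, ℂ)} {yH : G ⧸ H} (hφ : φ yH = 0) (a : A) :
    (Φ φ).fst a ∈ idealJ H Φ yH :=
  subset_closure (Submodule.subset_span ⟨φ, a, hφ, rfl⟩)

theorem closure_setOf_fst_map_apply_notMem_idealJ_subset (φ : C₀(G ⧸ H, ℂ)) (f : G → A) :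
    closure {p : G × (G ⧸ H) | (Φ φ).fst (f p.1) ∉ idealJ H Φ p.2} ⊆
      tsupport f ×ˢ tsupport φ := by
  refine closure_minimal (fun ⟨x, yH⟩ hp ↦ ⟨?_, ?_⟩)
    ((isClosed_tsupport f).prod (isClosed_tsupport φ))
  · by_contra hx
    exact hp (by simpa [image_eq_zero_of_notMem_tsupport hx] using zero_mem_idealJ H Φ yH)
  · by_contra hy
    exact hp (fst_map_apply_mem_idealJ H Φ (image_eq_zero_of_notMem_tsupport hy) _)

end idealJ

theorem dense_compactly_fibered_sections_general
    {G : Type*} [Group G] [TopologicalSpace G] [IsTopologicalGroup G]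
    [LocallyCompactSpace G]
    (H : Subgroup G) (hH : IsClosed (H : Set G))
    {A : Type*} [NonUnitalCStarAlgebra A]
    (Φ : C₀(G ⧸ H, ℂ) →⋆ₙₐ[ℂ] 𝓜(ℂ, A))
    -- nondegeneracy: the closed linear span of `{Φ(φ)·a}` is all of `A`
    (hnondeg : closure (Submodule.span ℂ
        {b : A | ∃ (φ : C₀(G ⧸ H, ℂ)) (a : A), b = (Φ φ).fst a} : Set A) = Set.univ)
    (f : G → A) (hf : Continuous f) (hf' : HasCompactSupport f)
    (ε : ℝ) (hε : 0 < ε) :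
    ∃ g : G → A, Continuous g ∧ HasCompactSupport g ∧
      Function.support g ⊆ Function.support f ∧
      (⨆ x : G, ‖f x - g x‖) ≤ ε ∧
      IsCompact (closure {p : G × (G ⧸ H) | g p.1 ∉ idealJ H Φ p.2}) := by
  -- as an instance this makes `G ⧸ H` Hausdorff, hence regular, as Urysohn's lemma needs
  have : IsClosed (H : Set G) := hH
  obtain ⟨K, hK, hKε⟩ := hasBasis_approxUnit.eventually_iff.1 <|
    Metric.tendstoUniformlyOn_iff.1
      (tendstoUniformlyOn_fst_map_approxUnit Φ hnondeg (hf'.image hf)) ε hε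
  obtain ⟨φ, hφ1, hφK, hφ⟩ := exists_norm_le_one_eqOn_one_hasCompactSupport (𝕜 := ℂ) hK
  refine ⟨fun x ↦ (Φ φ).fst (f x), (Φ φ).fst.continuous.comp hf, hf'.comp_left (map_zero _),
    Function.support_comp_subset (map_zero _) f, ciSup_le fun x ↦ ?_,
    (hf'.prod hφ).of_isClosed_subset isClosed_closure
      (closure_setOf_fst_map_apply_notMem_idealJ_subset H Φ φ f)⟩
  by_cases hx : x ∈ tsupport f
  · simpa [dist_eq_norm] using (hKε (x := ⟨φ, by simpa using hφ1⟩) hφK (f x) ⟨x, hx, rfl⟩).le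
  · simp [image_eq_zero_of_notMem_tsupport hx, hε.le]

/-- For every continuous compactly supported `f : G → A` and `ε > 0`, there is a continuous
compactly supported `g : G → A` with support contained in that of `f`, uniformly within `ε`
of `f`, such that `{(x, yH) : g(x) ∉ J_{yH}}` has compact closure in `G × (G/H)`. -/
theorem dense_compactly_fibered_sections
    {G : Type*} [Group G] [TopologicalSpace G] [IsTopologicalGroup G]
    [LocallyCompactSpace G] [T2Space G] [SecondCountableTopology G]
    (H : Subgroup G) (hH : IsClosed (H : Set G))
    {A : Type*} [NonUnitalCStarAlgebra A]
    (Φ : C₀(G ⧸ H, ℂ) →⋆ₙₐ[ℂ] 𝓜(ℂ, A))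
    -- centrality: `Φ(φ)·a = a·Φ(φ)` for all `φ` and `a`
    (hcentral : ∀ (φ : C₀(G ⧸ H, ℂ)) (a : A), (Φ φ).fst a = (Φ φ).snd a)
    -- nondegeneracy: the closed linear span of `{Φ(φ)·a}` is all of `A`
    (hnondeg : closure (Submodule.span ℂ
        {b : A | ∃ (φ : C₀(G ⧸ H, ℂ)) (a : A), b = (Φ φ).fst a} : Set A) = Set.univ)
    (f : G → A) (hf : Continuous f) (hf' : HasCompactSupport f)
    (ε : ℝ) (hε : 0 < ε) :
    ∃ g : G → A, Continuous g ∧ HasCompactSupport g ∧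
      Function.support g ⊆ Function.support f ∧
      (⨆ x : G, ‖f x - g x‖) ≤ ε ∧
      IsCompact (closure {p : G × (G ⧸ H) | g p.1 ∉ idealJ H Φ p.2}) :=
  dense_compactly_fibered_sections_general H hH Φ hnondeg f hf hf' ε hε
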